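/- For the complex Lorenz system X' = -κX + gY, Y' = dgX - γY + gXZ, Z' = -4g Re(conj(X)Y) - 2γZ with κ, γ > 0, g a nonzero real, and d ≥ 0, any solution on [0,T) satisfies |X(t)|² + (g²/(γκ))|Y(t)|² + (g²/(4γκ))Z(t)² ≤ exp(-t·min{κ - g²d/γ, γ - g²d/κ})·(|X(0)|² + (g²/(γκ))|Y(0)|² + (g²/(4γκ))Z(0)²). -/

import Mathlib

/-!
The weights of `V = ‖X‖² + g²/(γκ) ‖Y‖² + g²/(4γκ) Z²` are chosen so that the cubic terms
`g X Z` cancel in `V'`. What is left is the quadratic form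
`-2κ‖X‖² - (2g²/κ)‖Y‖² - (g²/κ)Z² + 2g(1 + g²d/(γκ)) Re(X̄ Y)`, which is at most `-λ V` for
`λ = min (κ - g²d/γ) (γ - g²d/κ)` because `(2κ - λ)(2γ - λ) ≥ (γκ + g²d)²/(γκ)`.
Grönwall's inequality then gives `V(t) ≤ exp(-λt) V(0)`.
-/

open Complex ComplexConjugate Set

theorem le_exp_mul_of_hasDerivAt_le_mul {f f' : ℝ → ℝ} {K a b : ℝ}
    (hf : ∀ t ∈ Ico a b, HasDerivAt f (f' t) t) (bound : ∀ t ∈ Ico a b, f' t ≤ K * f t) :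
    ∀ t ∈ Ico a b, f t ≤ Real.exp (K * (t - a)) * f a := by
  intro t ht
  have hsub : Icc a t ⊆ Ico a b := Icc_subset_Ico_right ht.2
  have hgron := le_gronwallBound_of_liminf_deriv_right_le (δ := f a) (ε := 0)
    (fun s hs => (hf s (hsub hs)).continuousAt.continuousWithinAt)
    (fun s hs _ hr =>
      (hf s (hsub (Ico_subset_Icc_self hs))).hasDerivWithinAt.liminf_right_slope_le hr)
    le_rfl (fun s hs => by simpa using bound s (hsub (Ico_subset_Icc_self hs))) t ⟨ht.1, le_rfl⟩
  rwa [gronwallBound_ε0, mul_comm] at hgron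

theorem two_mul_mul_mul_le_of_sq_le_mul {p q r : ℝ} (hp : 0 ≤ p) (hq : 0 ≤ q) (h : r ^ 2 ≤ p * q)
    (a b : ℝ) : 2 * r * a * b ≤ p * a ^ 2 + q * b ^ 2 := by
  rcases hp.eq_or_lt with rfl | hp
  · have : r = 0 := by nlinarith
    subst this; nlinarith
  · have key : 0 ≤ p * (p * a ^ 2 + q * b ^ 2 - 2 * r * a * b) := by
      nlinarith [sq_nonneg (p * a - r * b), mul_nonneg (sub_nonneg.2 h) (sq_nonneg b)]
    nlinarith [(mul_nonneg_iff_of_pos_left hp).1 key]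

theorem two_mul_re_conj_mul_le {p q r : ℝ} (hp : 0 ≤ p) (hq : 0 ≤ q) (h : r ^ 2 ≤ p * q)
    (x y : ℂ) : 2 * r * (conj x * y).re ≤ p * ‖x‖ ^ 2 + q * ‖y‖ ^ 2 := by
  have hre := two_mul_mul_mul_le_of_sq_le_mul hp hq h x.re y.re
  have him := two_mul_mul_mul_le_of_sq_le_mul hp hq h x.im y.im
  simp only [mul_re, conj_re, conj_im, Complex.sq_norm, normSq_apply]
  nlinarith

noncomputable def lorenzEnergy (κ γ g : ℝ) (x y : ℂ) (z : ℝ) : ℝ :=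
  ‖x‖ ^ 2 + g ^ 2 / (γ * κ) * ‖y‖ ^ 2 + g ^ 2 / (4 * γ * κ) * z ^ 2

theorem HasDerivAt.lorenzEnergy (κ γ g : ℝ) {t : ℝ} {X Y : ℝ → ℂ} {Z : ℝ → ℝ} {x' y' : ℂ}
    {z' : ℝ} (hX : HasDerivAt X x' t) (hY : HasDerivAt Y y' t) (hZ : HasDerivAt Z z' t) :
    HasDerivAt (fun s => lorenzEnergy κ γ g (X s) (Y s) (Z s))
      (2 * (conj (X t) * x').re + g ^ 2 / (γ * κ) * (2 * (conj (Y t) * y').re)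
        + g ^ 2 / (4 * γ * κ) * (2 * Z t * z')) t := by
  refine ((hX.norm_sq.add (hY.norm_sq.const_mul (g ^ 2 / (γ * κ)))).add
    ((hZ.pow 2).const_mul (g ^ 2 / (4 * γ * κ)))).congr_deriv ?_
  simp only [Complex.inner, mul_comm _ (conj _)]
  ring

theorem lorenzEnergy_rate_eq {κ γ : ℝ} (hκ : κ ≠ 0) (hγ : γ ≠ 0) (g d : ℝ) (x y : ℂ) (z : ℝ) :
    2 * (conj x * (-κ * x + g * y)).re
      + g ^ 2 / (γ * κ) * (2 * (conj y * (d * g * x - γ * y + g * x * z)).re)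
      + g ^ 2 / (4 * γ * κ) * (2 * z * (-4 * g * (conj x * y).re - 2 * γ * z))
    = -2 * κ * ‖x‖ ^ 2 - 2 * g ^ 2 / κ * ‖y‖ ^ 2 - g ^ 2 / κ * z ^ 2
      + 2 * (g * (1 + g ^ 2 * d / (γ * κ))) * (conj x * y).re := by
  simp only [mul_re, mul_im, add_re, add_im, sub_re, sub_im, neg_re, neg_im, conj_re, conj_im,
    ofReal_re, ofReal_im, Complex.sq_norm, normSq_apply]
  field_simp
  ring

theorem dissipation_le_neg_mul_lorenzEnergy {κ γ g d l : ℝ} (hκ : 0 < κ) (hγ : 0 < γ)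
    (hd : 0 ≤ d) (hlκ : l ≤ κ - g ^ 2 * d / γ) (hlγ : l ≤ γ - g ^ 2 * d / κ) (x y : ℂ) (z : ℝ) :
    -2 * κ * ‖x‖ ^ 2 - 2 * g ^ 2 / κ * ‖y‖ ^ 2 - g ^ 2 / κ * z ^ 2
      + 2 * (g * (1 + g ^ 2 * d / (γ * κ))) * (conj x * y).re
    ≤ -l * lorenzEnergy κ γ g x y z := by
  set s := γ * κ + g ^ 2 * d with hs_def
  have hκl : s / γ ≤ 2 * κ - l := by
    have : s / γ = κ + g ^ 2 * d / γ := by rw [hs_def]; field_simp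
    linarith
  have hγl : s / κ ≤ 2 * γ - l := by
    have : s / κ = γ + g ^ 2 * d / κ := by rw [hs_def]; field_simp
    linarith
  have hcross : (g * (1 + g ^ 2 * d / (γ * κ))) ^ 2
      ≤ (2 * κ - l) * (g ^ 2 / (γ * κ) * (2 * γ - l)) := by
    have e : (g * (1 + g ^ 2 * d / (γ * κ))) ^ 2 = g ^ 2 / (γ * κ) * (s / γ * (s / κ)) := by
      rw [hs_def]; field_simp
    rw [e, mul_left_comm]
    gcongr
    exact hκl.trans' (by positivity)
  have hXY := two_mul_re_conj_mul_le (hκl.trans' (by positivity))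
    (mul_nonneg (by positivity) (hγl.trans' (by positivity))) hcross x y
  have hl : l ≤ γ := hlγ.trans (sub_le_self _ (by positivity))
  have hz : l * (g ^ 2 / (4 * γ * κ) * z ^ 2) ≤ g ^ 2 / κ * z ^ 2 := by
    calc l * (g ^ 2 / (4 * γ * κ) * z ^ 2) ≤ γ * (g ^ 2 / (4 * γ * κ) * z ^ 2) := by gcongr
      _ = g ^ 2 / κ * z ^ 2 / 4 := by field_simp
      _ ≤ g ^ 2 / κ * z ^ 2 := by linarith [show 0 ≤ g ^ 2 / κ * z ^ 2 by positivity]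
  have hYcoeff : g ^ 2 / (γ * κ) * (2 * γ - l) = 2 * g ^ 2 / κ - l * (g ^ 2 / (γ * κ)) := by
    field_simp
  unfold lorenzEnergy
  rw [hYcoeff] at hXY
  linarith

theorem lorenz_decay_nonneg_d_general (κ γ g d T : ℝ) (X Y : ℝ → ℂ) (Z : ℝ → ℝ)
    (hκ : 0 < κ) (hγ : 0 < γ) (hd1 : 0 ≤ d)
    (hX : ∀ t ∈ Set.Ico (0:ℝ) T,
      HasDerivAt X (-(κ:ℂ) * X t + (g:ℂ) * Y t) t)
    (hY : ∀ t ∈ Set.Ico (0:ℝ) T,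
      HasDerivAt Y ((d:ℂ) * (g:ℂ) * X t - (γ:ℂ) * Y t + (g:ℂ) * X t * (Z t : ℂ)) t)
    (hZ : ∀ t ∈ Set.Ico (0:ℝ) T,
      HasDerivAt Z (-4 * g * ((starRingEnd ℂ) (X t) * Y t).re - 2 * γ * Z t) t) :
    ∀ t ∈ Set.Ico (0:ℝ) T,
      ‖X t‖ ^ 2 + g ^ 2 / (γ * κ) * ‖Y t‖ ^ 2 +
          g ^ 2 / (4 * γ * κ) * Z t ^ 2 ≤
        Real.exp (-t * min (κ - g ^ 2 * d / γ) (γ - g ^ 2 * d / κ)) *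
          (‖X 0‖ ^ 2 + g ^ 2 / (γ * κ) * ‖Y 0‖ ^ 2 +
            g ^ 2 / (4 * γ * κ) * Z 0 ^ 2) := by
  intro t ht
  have hV (s) (hs : s ∈ Ico 0 T) := (hX s hs).lorenzEnergy κ γ g (hY s hs) (hZ s hs)
  have hdecay := le_exp_mul_of_hasDerivAt_le_mul hV (fun s _ => by
    rw [lorenzEnergy_rate_eq hκ.ne' hγ.ne']
    exact dissipation_le_neg_mul_lorenzEnergy hκ hγ hd1 (min_le_left _ _) (min_le_right _ _) _ _ _)
    t ht
  simpa only [lorenzEnergy, sub_zero, neg_mul, mul_comm t] using hdecay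

/-- Exponential decay of the Lyapunov function
`|X|² + (g²/(γκ))|Y|² + (g²/(4γκ))Z²` for the complex Lorenz system when `d ≥ 0`. -/
theorem lorenz_decay_nonneg_d (κ γ g d T : ℝ) (X Y : ℝ → ℂ) (Z : ℝ → ℝ)
    (hκ : 0 < κ) (hγ : 0 < γ) (hg : g ≠ 0) (hd1 : 0 ≤ d) (hd2 : d < 1)
    (hX : ∀ t ∈ Set.Ico (0:ℝ) T,
      HasDerivAt X (-(κ:ℂ) * X t + (g:ℂ) * Y t) t)
    (hY : ∀ t ∈ Set.Ico (0:ℝ) T,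
      HasDerivAt Y ((d:ℂ) * (g:ℂ) * X t - (γ:ℂ) * Y t + (g:ℂ) * X t * (Z t : ℂ)) t)
    (hZ : ∀ t ∈ Set.Ico (0:ℝ) T,
      HasDerivAt Z (-4 * g * ((starRingEnd ℂ) (X t) * Y t).re - 2 * γ * Z t) t) :
    ∀ t ∈ Set.Ico (0:ℝ) T,
      ‖X t‖ ^ 2 + g ^ 2 / (γ * κ) * ‖Y t‖ ^ 2 +
          g ^ 2 / (4 * γ * κ) * Z t ^ 2 ≤
        Real.exp (-t * min (κ - g ^ 2 * d / γ) (γ - g ^ 2 * d / κ)) *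
          (‖X 0‖ ^ 2 + g ^ 2 / (γ * κ) * ‖Y 0‖ ^ 2 +
            g ^ 2 / (4 * γ * κ) * Z 0 ^ 2) :=
  lorenz_decay_nonneg_d_general κ γ g d T X Y Z hκ hγ hd1 hX hY hZ
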